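/- Let Γ be the random bipartite graph, let G be a closed subgroup with Aut(Γ)* ≤ G ≤ S_{l,r}(Γ), and let X be the largest subset of {l,r} such that S_X(Γ)* ⊆ G. Then there exists a finite bipartite subgraph H of Γ with the following property: for any i ∈ {l,r}, if there exist a vertex v ∈ H ∩ R_i and g ∈ G such that g↾H is a switch with respect to v, then i ∈ X. -/

import Mathlib

/-! If `i ∉ X`, fix a vertex `v ∈ R_i`. Some finite `D ∋ v` carries no restriction of an element
of `G` that is a switch with respect to `v`: otherwise, `G` being closed and `Γ` homogeneous, `G`
would contain every switch with respect to a vertex of `R_i`, so `S_{X ∪ {i}}(Γ)* ≤ G`, against the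
maximality of `X`. It remains to find a finite `H` which contains, at each of its vertices `w` of
side `i`, a copy of `D` with `v` placed at `w`: the automorphism carrying `D` onto that copy turns
a switch with respect to `w` on `H` into a switch with respect to `v` on `D`. Such an `H` is built
from two copies of `D_l` and two of `D_r`, each vertex on side `j` serving as the pivot of a copy
of `D_j` not containing it, and is embedded in `Γ` by the extension properties. -/

/-! Preamble: bipartite graphs, the random bipartite graph, side-preserving
permutation groups, switches, switch groups, and related notions. -/

/-- A bipartite graph on a vertex type `V`: the sides `left` and `right`
partition `V`, both sides are nonempty, and `adj` (the relation `P₁`) only holds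
from `left` to `right`.  The relation `P₂` is the complement of `adj` on
`left × right`. -/
structure BipartiteGraph (V : Type*) where
  left : Set V
  right : Set V
  adj : V → V → Prop
  left_nonempty : left.Nonempty
  right_nonempty : right.Nonempty
  union_eq : left ∪ right = Set.univ
  disjoint_sides : Disjoint left right
  adj_dom : ∀ a b, adj a b → a ∈ left ∧ b ∈ right

/-- The two sides of a bipartite graph. -/
inductive BSide : Type
  | l : BSide
  | r : BSide
deriving DecidableEq

namespace BipartiteGraph

variable {V : Type*} (Γ : BipartiteGraph V)

/-- The side of the graph indexed by an element of `BSide`. -/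
def side : BSide → Set V
  | BSide.l => Γ.left
  | BSide.r => Γ.right

/-- `Γ` is (isomorphic to) the random bipartite graph: it is countable, both
sides are infinite, and it satisfies the extension properties `Θₙ` for all `n`. -/
structure IsRandom : Prop where
  countable : Countable V
  left_infinite : Γ.left.Infinite
  right_infinite : Γ.right.Infinite
  ext_left : ∀ X₁ X₂ : Finset V, ↑X₁ ⊆ Γ.left → ↑X₂ ⊆ Γ.left → Disjoint X₁ X₂ →
      ∃ v ∈ Γ.right, (∀ x ∈ X₁, Γ.adj x v) ∧ (∀ x ∈ X₂, ¬ Γ.adj x v)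
  ext_right : ∀ X₁ X₂ : Finset V, ↑X₁ ⊆ Γ.right → ↑X₂ ⊆ Γ.right → Disjoint X₁ X₂ →
      ∃ v ∈ Γ.left, (∀ x ∈ X₁, Γ.adj v x) ∧ (∀ x ∈ X₂, ¬ Γ.adj v x)

/-- `Sym_{l,r}(Γ)`: the group of permutations of `V` preserving both sides. -/
def symLR : Subgroup (Equiv.Perm V) where
  carrier := {g | (∀ v, g v ∈ Γ.left ↔ v ∈ Γ.left) ∧ (∀ v, g v ∈ Γ.right ↔ v ∈ Γ.right)}
  one_mem' := ⟨fun _ => Iff.rfl, fun _ => Iff.rfl⟩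
  mul_mem' := by
    rintro a b ⟨hal, har⟩ ⟨hbl, hbr⟩
    exact ⟨fun v => (hal (b v)).trans (hbl v), fun v => (har (b v)).trans (hbr v)⟩
  inv_mem' := by
    rintro a ⟨hal, har⟩
    refine ⟨fun v => ?_, fun v => ?_⟩
    · have h := hal (a⁻¹ v); rw [← Equiv.Perm.mul_apply, mul_inv_cancel, Equiv.Perm.one_apply] at h; exact h.symm
    · have h := har (a⁻¹ v); rw [← Equiv.Perm.mul_apply, mul_inv_cancel, Equiv.Perm.one_apply] at h; exact h.symm

/-- The automorphism group of `Γ`: side-preserving permutations preserving `adj`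
(and hence both cross-types). -/
def autGroup : Subgroup (Equiv.Perm V) where
  carrier := {g | g ∈ Γ.symLR ∧ ∀ a b, Γ.adj a b ↔ Γ.adj (g a) (g b)}
  one_mem' := ⟨Γ.symLR.one_mem, fun _ _ => Iff.rfl⟩
  mul_mem' := by
    rintro a b ⟨ha, ha2⟩ ⟨hb, hb2⟩
    exact ⟨mul_mem ha hb, fun x y => (hb2 x y).trans (ha2 (b x) (b y))⟩
  inv_mem' := by
    rintro a ⟨ha, ha2⟩
    refine ⟨inv_mem ha, fun x y => ?_⟩
    have h := ha2 (a⁻¹ x) (a⁻¹ y)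
    rw [← Equiv.Perm.mul_apply, ← Equiv.Perm.mul_apply, mul_inv_cancel,
      Equiv.Perm.one_apply, Equiv.Perm.one_apply] at h
    exact h.symm

/-- A permutation `g` is a switch with respect to a set `A` if it preserves the
sides and, for every cross-edge `(a, b)`, the cross-type of `(a, b)` is preserved
if and only if `|{a, b} ∩ A| ≠ 1`. -/
def IsSwitch (g : Equiv.Perm V) (A : Set V) : Prop :=
  g ∈ Γ.symLR ∧ ∀ a ∈ Γ.left, ∀ b ∈ Γ.right,
    ((Γ.adj a b ↔ Γ.adj (g a) (g b)) ↔ ({a, b} ∩ A : Set V).ncard ≠ 1)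

/-- The restriction of a map `g` to a set `S` is a switch with respect to `A`:
the condition of `IsSwitch` holds for all cross-edges inside `S`. -/
def IsSwitchOn (g : V → V) (S : Set V) (A : Set V) : Prop :=
  ∀ a ∈ S ∩ Γ.left, ∀ b ∈ S ∩ Γ.right,
    ((Γ.adj a b ↔ Γ.adj (g a) (g b)) ↔ ({a, b} ∩ A : Set V).ncard ≠ 1)

/-- The restriction of a map `g` to a set `S` is an isomorphism: `g` preserves
the cross-type of every cross-edge inside `S`. -/
def IsIsoOn (g : V → V) (S : Set V) : Prop :=
  ∀ a ∈ S ∩ Γ.left, ∀ b ∈ S ∩ Γ.right, (Γ.adj a b ↔ Γ.adj (g a) (g b))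

end BipartiteGraph

/-- A subgroup of the full symmetric group is closed (in the topology of
pointwise convergence) iff it contains every permutation which agrees with some
member of the subgroup on each finite subset. -/
def IsClosedSubgroup {V : Type*} (G : Subgroup (Equiv.Perm V)) : Prop :=
  ∀ g : Equiv.Perm V, (∀ F : Finset V, ∃ h ∈ G, ∀ x ∈ F, h x = g x) → g ∈ G

/-- The closed subgroup generated by a set of permutations: the intersection of
all closed subgroups containing the set. -/
def closedClosure {V : Type*} (S : Set (Equiv.Perm V)) : Subgroup (Equiv.Perm V) :=
  sInf {G : Subgroup (Equiv.Perm V) | IsClosedSubgroup G ∧ S ⊆ ↑G}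

namespace BipartiteGraph

variable {V : Type*} (Γ : BipartiteGraph V)

/-- The switch group `S_X(Γ)`: the closed subgroup of `Sym_{l,r}(Γ)` generated
by `Aut(Γ)` together with all switches with respect to a single vertex `v ∈ R_i`
for `i ∈ X`. -/
def switchGroup (X : Set BSide) : Subgroup (Equiv.Perm V) :=
  closedClosure ((Γ.autGroup : Set (Equiv.Perm V)) ∪
    {g | ∃ i ∈ X, ∃ v ∈ Γ.side i, Γ.IsSwitch g {v}})

/-- The group `S_X(Γ)* `: the closed subgroup generated by `S_X(Γ)` together with
a switch `ρ` with respect to the whole side `R_l`. -/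
def switchGroupStar (X : Set BSide) : Subgroup (Equiv.Perm V) :=
  closedClosure ((Γ.switchGroup X : Set (Equiv.Perm V)) ∪ {g | Γ.IsSwitch g Γ.left})

/-- Membership in `Aut(Γ)*`, the group of side-preserving permutations which
either preserve all cross-types on `R_l × R_r` or exchange all cross-types on
`R_l × R_r`. -/
def InAutStar (g : Equiv.Perm V) : Prop :=
  g ∈ Γ.symLR ∧
    ((∀ a ∈ Γ.left, ∀ b ∈ Γ.right, (Γ.adj a b ↔ Γ.adj (g a) (g b))) ∨
     (∀ a ∈ Γ.left, ∀ b ∈ Γ.right, (Γ.adj a b ↔ ¬ Γ.adj (g a) (g b))))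

/-- The number of cross-edges of cross-type `P₁` inside the set `S`. -/
noncomputable def edgeCount (S : Set V) : ℕ :=
  {p : V × V | p.1 ∈ S ∧ p.2 ∈ S ∧ Γ.adj p.1 p.2}.ncard

/-- `g` preserves the parity of cross-types on `S`: the number of `P₁`
cross-edges in `S` is even iff the number of `P₁` cross-edges in `g[S]` is even. -/
def PreservesParityOn (g : V → V) (S : Set V) : Prop :=
  Even (Γ.edgeCount S) ↔ Even (Γ.edgeCount (g '' S))

/-- An `(m × n)`-subgraph of `Γ`: a finite set of vertices with `m` vertices on
the left side and `n` vertices on the right side. -/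
def IsMNSubgraph (S : Set V) (m n : ℕ) : Prop :=
  S.Finite ∧ (S ∩ Γ.left).ncard = m ∧ (S ∩ Γ.right).ncard = n

end BipartiteGraph

theorem ncard_pair_inter_singleton_ne_one_iff {V : Type*} {a b v : V} :
    ({a, b} ∩ {v} : Set V).ncard ≠ 1 ↔ v ≠ a ∧ v ≠ b := by
  by_cases h : v ∈ ({a, b} : Set V)
  · rw [Set.inter_singleton_of_mem h, Set.ncard_singleton]
    simp only [Set.mem_insert_iff, Set.mem_singleton_iff] at h
    tauto
  · rw [Set.inter_singleton_eq_empty.2 h, Set.ncard_empty]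
    simp only [Set.mem_insert_iff, Set.mem_singleton_iff] at h
    tauto

theorem subset_closedClosure {V : Type*} (S : Set (Equiv.Perm V)) :
    S ⊆ closedClosure S :=
  fun _ hg => Subgroup.mem_sInf.2 fun _ hG => hG.2 hg

theorem closedClosure_le {V : Type*} {S : Set (Equiv.Perm V)} {G : Subgroup (Equiv.Perm V)}
    (hG : IsClosedSubgroup G) (hS : S ⊆ G) : closedClosure S ≤ G :=
  sInf_le ⟨hG, hS⟩

namespace BipartiteGraph

variable {V : Type*} {Γ : BipartiteGraph V}

theorem mem_right_iff_notMem_left {x : V} : x ∈ Γ.right ↔ x ∉ Γ.left := by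
  refine ⟨fun hr hl => Γ.disjoint_sides.le_bot ⟨hl, hr⟩, fun hl => ?_⟩
  have hx : x ∈ Γ.left ∪ Γ.right := Γ.union_eq ▸ Set.mem_univ x
  exact hx.resolve_left hl

theorem ne_of_mem_left_of_mem_right {a b : V} (ha : a ∈ Γ.left) (hb : b ∈ Γ.right) : a ≠ b :=
  fun h => mem_right_iff_notMem_left.1 (h ▸ hb) ha

theorem mem_left_iff_of_mem_side {i : BSide} {x y : V} (hx : x ∈ Γ.side i) (hy : y ∈ Γ.side i) :
    x ∈ Γ.left ↔ y ∈ Γ.left := by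
  cases i with
  | l => exact iff_of_true hx hy
  | r => exact iff_of_false (mem_right_iff_notMem_left.1 hx) (mem_right_iff_notMem_left.1 hy)

variable (Γ) in
theorem side_nonempty (i : BSide) : (Γ.side i).Nonempty := by
  cases i
  exacts [Γ.left_nonempty, Γ.right_nonempty]

variable (Γ) in
theorem isClosedSubgroup_symLR : IsClosedSubgroup Γ.symLR := by
  intro g hg
  refine ⟨fun v => ?_, fun v => ?_⟩ <;> obtain ⟨h, hh, hhg⟩ := hg {v} <;>
    rw [← hhg v (Finset.mem_singleton_self v)]
  exacts [hh.1 v, hh.2 v]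

variable (Γ) in
theorem switchGroup_le_symLR (X : Set BSide) : Γ.switchGroup X ≤ Γ.symLR := by
  refine closedClosure_le Γ.isClosedSubgroup_symLR ?_
  rintro g (hg | ⟨_, _, _, _, hg⟩)
  exacts [hg.1, hg.1]

theorem inAutStar_of_mem_autGroup {g : Equiv.Perm V} (hg : g ∈ Γ.autGroup) : Γ.InAutStar g :=
  ⟨hg.1, Or.inl fun a _ b _ => hg.2 a b⟩

theorem switchGroupStar_insert_le {G : Subgroup (Equiv.Perm V)} (hG : IsClosedSubgroup G)
    {X : Set BSide} (hX : Γ.switchGroupStar X ≤ G) {i : BSide}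
    (hi : ∀ v ∈ Γ.side i, ∀ g, Γ.IsSwitch g {v} → g ∈ G) :
    Γ.switchGroupStar (insert i X) ≤ G := by
  have hXG : Γ.switchGroup X ≤ G :=
    fun g hg => hX (subset_closedClosure _ (Or.inl hg))
  refine closedClosure_le hG ?_
  rintro g (hg | hg)
  · refine closedClosure_le hG ?_ hg
    rintro g (hg | ⟨j, rfl | hj, v, hv, hsw⟩)
    · exact hXG (subset_closedClosure _ (Or.inl hg))
    · exact hi v hv g hsw
    · exact hXG (subset_closedClosure _ (Or.inr ⟨j, hj, v, hv, hsw⟩))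
  · exact hX (subset_closedClosure _ (Or.inr hg))

theorem IsSwitch.isSwitchOn {g : Equiv.Perm V} {A : Set V} (hg : Γ.IsSwitch g A) (S : Set V) :
    Γ.IsSwitchOn g S A :=
  fun a ha b hb => hg.2 a ha.2 b hb.2

theorem IsSwitchOn.mono {g : V → V} {S T A : Set V} (hg : Γ.IsSwitchOn g S A) (hTS : T ⊆ S) :
    Γ.IsSwitchOn g T A :=
  fun a ha b hb => hg a ⟨hTS ha.1, ha.2⟩ b ⟨hTS hb.1, hb.2⟩

theorem IsSwitchOn.adj_iff_adj {f g : V → V} {S A : Set V} (hf : Γ.IsSwitchOn f S A)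
    (hg : Γ.IsSwitchOn g S A) {a b : V} (ha : a ∈ S ∩ Γ.left) (hb : b ∈ S ∩ Γ.right) :
    Γ.adj (f a) (f b) ↔ Γ.adj (g a) (g b) := by
  have hfab := hf a ha b hb
  have hgab := hg a ha b hb
  tauto

theorem IsSwitchOn.mul_of_mem_autGroup {g α : Equiv.Perm V} {S T : Set V} {v : V}
    (hg : Γ.IsSwitchOn g S {α v}) (hα : α ∈ Γ.autGroup) (hTS : Set.MapsTo α T S) :
    Γ.IsSwitchOn (g * α) T {v} := by
  intro a ha b hb
  have h := hg (α a) ⟨hTS ha.1, (hα.1.1 a).2 ha.2⟩ (α b) ⟨hTS hb.1, (hα.1.2 b).2 hb.2⟩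
  rw [ncard_pair_inter_singleton_ne_one_iff, α.injective.ne_iff, α.injective.ne_iff,
    ← hα.2 a b] at h
  rwa [ncard_pair_inter_singleton_ne_one_iff, Equiv.Perm.mul_apply, Equiv.Perm.mul_apply]

variable (Γ) in
def flip : BipartiteGraph V where
  left := Γ.right
  right := Γ.left
  adj a b := Γ.adj b a
  left_nonempty := Γ.right_nonempty
  right_nonempty := Γ.left_nonempty
  union_eq := Set.union_comm _ _ ▸ Γ.union_eq
  disjoint_sides := Γ.disjoint_sides.symm
  adj_dom a b h := (Γ.adj_dom b a h).symm

theorem IsRandom.flip (hΓ : Γ.IsRandom) : Γ.flip.IsRandom where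
  countable := hΓ.countable
  left_infinite := hΓ.right_infinite
  right_infinite := hΓ.left_infinite
  ext_left := hΓ.ext_right
  ext_right := hΓ.ext_left

theorem IsRandom.exists_mem_right_adj_iff (hΓ : Γ.IsRandom) (Z L : Finset V)
    (hL : ↑L ⊆ Γ.left) (q : V → Prop) :
    ∃ y ∈ Γ.right, y ∉ Z ∧ ∀ x ∈ L, Γ.adj x y ↔ q x := by
  classical
  induction Z using Finset.induction_on generalizing L q with
  | empty =>
    obtain ⟨y, hy, hyes, hno⟩ := hΓ.ext_left (L.filter q) (L.filter (¬ q ·))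
      (fun x hx => hL (Finset.mem_of_mem_filter x hx))
      (fun x hx => hL (Finset.mem_of_mem_filter x hx)) (Finset.disjoint_filter_filter_not _ _ _)
    refine ⟨y, hy, Finset.notMem_empty y, fun x hx => ⟨fun hxy => ?_, fun hqx => ?_⟩⟩
    · by_contra hqx
      exact hno x (Finset.mem_filter.2 ⟨hx, hqx⟩) hxy
    · exact hyes x (Finset.mem_filter.2 ⟨hx, hqx⟩)
  | @insert z Z _ ih =>
    -- a fresh left vertex `ℓ` whose adjacency to `y` is forced to differ from that to `z`
    obtain ⟨ℓ, hℓ, hℓL⟩ := (hΓ.left_infinite.sdiff L.finite_toSet).nonempty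
    obtain ⟨y, hy, hyZ, hyq⟩ := ih (insert ℓ L) (by simpa using Set.insert_subset hℓ hL)
      (fun x => if x = ℓ then ¬ Γ.adj ℓ z else q x)
    have hyz : y ≠ z := by
      rintro rfl
      simpa using hyq ℓ (Finset.mem_insert_self ℓ L)
    refine ⟨y, hy, by simp [hyz, hyZ], fun x hx => ?_⟩
    have hxℓ : x ≠ ℓ := by rintro rfl; exact hℓL hx
    simpa [hxℓ] using hyq x (Finset.mem_insert_of_mem hx)

theorem IsRandom.exists_mem_left_adj_iff (hΓ : Γ.IsRandom) (Z R : Finset V)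
    (hR : ↑R ⊆ Γ.right) (q : V → Prop) :
    ∃ x ∈ Γ.left, x ∉ Z ∧ ∀ y ∈ R, Γ.adj x y ↔ q y :=
  hΓ.flip.exists_mem_right_adj_iff Z R hR q

variable (Γ) in
/-- `s` is the graph of a partial isomorphism of `Γ`. -/
structure IsPartialIso (s : Set (V × V)) : Prop where
  mem_left_iff : ∀ p ∈ s, p.1 ∈ Γ.left ↔ p.2 ∈ Γ.left
  fst_eq_iff : ∀ p ∈ s, ∀ q ∈ s, p.1 = q.1 ↔ p.2 = q.2
  adj_iff : ∀ p ∈ s, ∀ q ∈ s, Γ.adj p.1 q.1 ↔ Γ.adj p.2 q.2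

namespace IsPartialIso

theorem of_pair {s : Set (V × V)}
    (h : ∀ p ∈ s, ∀ q ∈ s, ∃ t, Γ.IsPartialIso t ∧ p ∈ t ∧ q ∈ t) : Γ.IsPartialIso s where
  mem_left_iff p hp := by
    obtain ⟨t, ht, hpt, -⟩ := h p hp p hp
    exact ht.mem_left_iff p hpt
  fst_eq_iff p hp q hq := by
    obtain ⟨t, ht, hpt, hqt⟩ := h p hp q hq
    exact ht.fst_eq_iff p hpt q hqt
  adj_iff p hp q hq := by
    obtain ⟨t, ht, hpt, hqt⟩ := h p hp q hq
    exact ht.adj_iff p hpt q hqt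

theorem image_swap {s : Set (V × V)} (hs : Γ.IsPartialIso s) :
    Γ.IsPartialIso (Prod.swap '' s) where
  mem_left_iff := by
    rintro _ ⟨p, hp, rfl⟩
    exact (hs.mem_left_iff p hp).symm
  fst_eq_iff := by
    rintro _ ⟨p, hp, rfl⟩ _ ⟨q, hq, rfl⟩
    exact (hs.fst_eq_iff p hp q hq).symm
  adj_iff := by
    rintro _ ⟨p, hp, rfl⟩ _ ⟨q, hq, rfl⟩
    exact (hs.adj_iff p hp q hq).symm

theorem flip {s : Set (V × V)} (hs : Γ.IsPartialIso s) : Γ.flip.IsPartialIso s where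
  mem_left_iff p hp := by
    simp only [BipartiteGraph.flip, mem_right_iff_notMem_left, hs.mem_left_iff p hp]
  fst_eq_iff := hs.fst_eq_iff
  adj_iff p hp q hq := hs.adj_iff q hq p hp

theorem of_flip {s : Set (V × V)} (hs : Γ.flip.IsPartialIso s) : Γ.IsPartialIso s :=
  hs.flip

end IsPartialIso

theorem IsRandom.exists_isPartialIso_insert_fst_of_mem_left (hΓ : Γ.IsRandom)
    {s : Finset (V × V)} (hs : Γ.IsPartialIso s) {x : V} (hx : x ∈ Γ.left) :
    ∃ y, Γ.IsPartialIso (insert (x, y) (s : Set (V × V))) := by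
  classical
  by_cases hxs : ∃ y, (x, y) ∈ s
  · obtain ⟨y, hy⟩ := hxs
    exact ⟨y, by rwa [Set.insert_eq_of_mem (Finset.mem_coe.2 hy)]⟩
  simp only [not_exists] at hxs
  -- `y` copies the adjacencies of `x` to the right vertices of the domain, transported by `s`
  obtain ⟨y, hy, hys, hyadj⟩ := hΓ.exists_mem_left_adj_iff (s.image Prod.snd)
    ((s.image Prod.snd).filter (· ∈ Γ.right)) (fun _ hb => (Finset.mem_filter.1 hb).2)
    (fun b => ∃ p ∈ s, p.2 = b ∧ Γ.adj x p.1)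
  have hadj : ∀ p ∈ s, Γ.adj x p.1 ↔ Γ.adj y p.2 := by
    intro p hp
    by_cases hpr : p.2 ∈ Γ.right
    · rw [hyadj p.2 (Finset.mem_filter.2 ⟨Finset.mem_image_of_mem _ hp, hpr⟩)]
      refine ⟨fun h => ⟨p, hp, rfl, h⟩, ?_⟩
      rintro ⟨q, hq, hqp, hxq⟩
      rwa [(hs.fst_eq_iff q hq p hp).2 hqp] at hxq
    · have hpr' : p.1 ∉ Γ.right := by
        simpa [mem_right_iff_notMem_left, hs.mem_left_iff p hp] using hpr
      exact iff_of_false (fun h => hpr' (Γ.adj_dom _ _ h).2) (fun h => hpr (Γ.adj_dom _ _ h).2)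
  have hnotadj : ∀ {a b : V}, a ∈ Γ.left → ¬ Γ.adj b a := fun ha h =>
    mem_right_iff_notMem_left.1 (Γ.adj_dom _ _ h).2 ha
  refine ⟨y, ?_, ?_, ?_⟩ <;> simp only [Set.forall_mem_insert, Finset.mem_coe]
  · exact ⟨iff_of_true hx hy, hs.mem_left_iff⟩
  · refine ⟨⟨by simp, fun q hq => ?_⟩, fun p hp => ⟨?_, hs.fst_eq_iff p hp⟩⟩
    · exact iff_of_false (fun h => hxs q.2 (h ▸ hq))
        (fun h => hys (h ▸ Finset.mem_image_of_mem _ hq))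
    · exact iff_of_false (fun h => hxs p.2 (h ▸ hp))
        (fun h => hys (h ▸ Finset.mem_image_of_mem _ hp))
  · exact ⟨⟨iff_of_false (hnotadj hx) (hnotadj hy), hadj⟩,
      fun p hp => ⟨iff_of_false (hnotadj hx) (hnotadj hy), hs.adj_iff p hp⟩⟩

theorem IsRandom.exists_isPartialIso_insert_fst (hΓ : Γ.IsRandom) {s : Finset (V × V)}
    (hs : Γ.IsPartialIso s) (x : V) : ∃ y, Γ.IsPartialIso (insert (x, y) (s : Set (V × V))) := by
  by_cases hx : x ∈ Γ.left
  · exact hΓ.exists_isPartialIso_insert_fst_of_mem_left hs hx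
  · obtain ⟨y, hy⟩ := hΓ.flip.exists_isPartialIso_insert_fst_of_mem_left hs.flip
      (mem_right_iff_notMem_left.2 hx)
    exact ⟨y, hy.of_flip⟩

theorem IsRandom.exists_isPartialIso_insert_snd (hΓ : Γ.IsRandom) {s : Finset (V × V)}
    (hs : Γ.IsPartialIso s) (y : V) : ∃ x, Γ.IsPartialIso (insert (x, y) (s : Set (V × V))) := by
  classical
  obtain ⟨x, hx⟩ := hΓ.exists_isPartialIso_insert_fst (s := s.image Prod.swap)
    (by simpa using hs.image_swap) y
  refine ⟨x, ?_⟩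
  simpa [Set.image_insert_eq, Set.image_image] using hx.image_swap

theorem IsPartialIso.exists_autGroup {U : Set (V × V)} (hU : Γ.IsPartialIso U)
    (hdom : ∀ x, ∃ y, (x, y) ∈ U) (hran : ∀ y, ∃ x, (x, y) ∈ U) :
    ∃ σ ∈ Γ.autGroup, ∀ p ∈ U, σ p.1 = p.2 := by
  choose f hf using hdom
  have hfU : ∀ p ∈ U, f p.1 = p.2 := fun p hp => (hU.fst_eq_iff _ (hf p.1) p hp).1 rfl
  have hbij : Function.Bijective f :=
    ⟨fun a b hab => (hU.fst_eq_iff _ (hf a) _ (hf b)).2 hab,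
      fun y => (hran y).imp fun x hx => hfU _ hx⟩
  have hleft : ∀ v, f v ∈ Γ.left ↔ v ∈ Γ.left := fun v => (hU.mem_left_iff _ (hf v)).symm
  refine ⟨Equiv.ofBijective f hbij, ⟨⟨hleft, fun v => ?_⟩, fun a b => ?_⟩, hfU⟩
  · simp only [Equiv.ofBijective_apply, mem_right_iff_notMem_left, hleft]
  · exact hU.adj_iff _ (hf a) _ (hf b)

theorem IsRandom.exists_autGroup_of_isPartialIso (hΓ : Γ.IsRandom) {s : Finset (V × V)}
    (hs : Γ.IsPartialIso s) : ∃ σ ∈ Γ.autGroup, ∀ p ∈ s, σ p.1 = p.2 := by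
  classical
  have := hΓ.countable
  have := Encodable.ofCountable V
  let P := {t : Finset (V × V) // Γ.IsPartialIso t}
  let 𝒟 : V ⊕ V → Order.Cofinal P
    | .inl x => ⟨{t | ∃ y, (x, y) ∈ t.1}, fun t =>
        let ⟨y, hy⟩ := hΓ.exists_isPartialIso_insert_fst t.2 x
        ⟨⟨insert (x, y) t.1, by simpa using hy⟩, ⟨y, Finset.mem_insert_self _ _⟩,
          Finset.subset_insert _ _⟩⟩
    | .inr y => ⟨{t | ∃ x, (x, y) ∈ t.1}, fun t =>
        let ⟨x, hx⟩ := hΓ.exists_isPartialIso_insert_snd t.2 y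
        ⟨⟨insert (x, y) t.1, by simpa using hx⟩, ⟨x, Finset.mem_insert_self _ _⟩,
          Finset.subset_insert _ _⟩⟩
  let I := Order.idealOfCofinals (⟨s, hs⟩ : P) 𝒟
  have hU : Γ.IsPartialIso {p | ∃ t ∈ I, p ∈ t.1} := IsPartialIso.of_pair
    fun p ⟨t, ht, hpt⟩ q ⟨t', ht', hqt⟩ =>
      let ⟨m, _, htm, ht'm⟩ := I.directed _ ht _ ht'
      ⟨m.1, m.2, htm hpt, ht'm hqt⟩
  obtain ⟨σ, hσ, hσU⟩ := hU.exists_autGroup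
    (fun x => let ⟨t, ⟨y, hy⟩, ht⟩ := Order.cofinal_meets_idealOfCofinals _ 𝒟 (.inl x)
      ⟨y, t, ht, hy⟩)
    (fun y => let ⟨t, ⟨x, hx⟩, ht⟩ := Order.cofinal_meets_idealOfCofinals _ 𝒟 (.inr y)
      ⟨x, t, ht, hx⟩)
  exact ⟨σ, hσ, fun p hp => hσU p ⟨_, Order.mem_idealOfCofinals _ _, hp⟩⟩

theorem IsRandom.exists_autGroup_map_eq (hΓ : Γ.IsRandom) (D : Finset V) {f g : V → V}
    (hside : ∀ x ∈ D, f x ∈ Γ.left ↔ g x ∈ Γ.left) (hf : Set.InjOn f D) (hg : Set.InjOn g D)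
    (hadj : ∀ a ∈ D, ∀ b ∈ D, f a ∈ Γ.left → f b ∈ Γ.right →
      (Γ.adj (f a) (f b) ↔ Γ.adj (g a) (g b))) :
    ∃ σ ∈ Γ.autGroup, ∀ x ∈ D, σ (f x) = g x := by
  classical
  have hs : Γ.IsPartialIso ↑(D.image fun x => (f x, g x)) := by
    refine ⟨?_, ?_, ?_⟩ <;> simp only [Finset.coe_image, Set.forall_mem_image, Finset.mem_coe]
    · exact hside
    · exact fun a ha b hb => ⟨fun h => congrArg g (hf ha hb h), fun h => congrArg f (hg ha hb h)⟩
    · intro a ha b hb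
      by_cases hab : f a ∈ Γ.left ∧ f b ∈ Γ.right
      · exact hadj a ha b hb hab.1 hab.2
      · refine iff_of_false (fun h => hab (Γ.adj_dom _ _ h)) (fun h => hab ?_)
        obtain ⟨hal, hbr⟩ := Γ.adj_dom _ _ h
        rw [mem_right_iff_notMem_left, hside b hb, ← mem_right_iff_notMem_left]
        exact ⟨(hside a ha).2 hal, hbr⟩
  obtain ⟨σ, hσ, hσD⟩ := hΓ.exists_autGroup_of_isPartialIso hs
  exact ⟨σ, hσ, fun x hx => hσD _ (Finset.mem_image_of_mem _ hx)⟩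

/-- Homogeneity moves `u` to `v₀`, and two switches with respect to `u` on a finite set differ
there by a partial isomorphism, which extends to an automorphism. -/
theorem IsRandom.mem_of_isSwitch (hΓ : Γ.IsRandom) {G : Subgroup (Equiv.Perm V)}
    (hG : IsClosedSubgroup G) (hAut : Γ.autGroup ≤ G) (hGsym : G ≤ Γ.symLR) {u v₀ : V}
    (huv : u ∈ Γ.left ↔ v₀ ∈ Γ.left) (happrox : ∀ D : Finset V, ∃ g ∈ G, Γ.IsSwitchOn g D {v₀})
    {g : Equiv.Perm V} (hg : Γ.IsSwitch g {u}) : g ∈ G := by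
  classical
  refine hG g fun F => ?_
  obtain ⟨δ, hδ, hδu⟩ := hΓ.exists_autGroup_map_eq {u} (f := id) (g := fun _ => v₀)
    (by simpa using huv) (by simp) (by simp)
    (by simpa using fun hl hr => (ne_of_mem_left_of_mem_right hl hr rfl).elim)
  obtain ⟨g₁, hg₁G, hg₁⟩ := happrox (F.image δ)
  rw [← hδu u (Finset.mem_singleton_self u)] at hg₁
  have hsw : Γ.IsSwitchOn (g₁ * δ) F {u} :=
    hg₁.mul_of_mem_autGroup hδ fun x hx => Finset.mem_coe.2 (Finset.mem_image_of_mem δ hx)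
  have hg₁δG : g₁ * δ ∈ G := G.mul_mem hg₁G (hAut hδ)
  have hg₁δ := hGsym hg₁δG
  obtain ⟨β, hβ, hβg⟩ := hΓ.exists_autGroup_map_eq F (f := g₁ * δ) (g := g)
    (fun x _ => by rw [hg₁δ.1, hg.1.1]) (g₁ * δ).injective.injOn g.injective.injOn
    (fun a ha b hb hal hbr => hsw.adj_iff_adj (hg.isSwitchOn F)
      ⟨ha, (hg₁δ.1 a).1 hal⟩ ⟨hb, (hg₁δ.2 b).1 hbr⟩)
  exact ⟨β * (g₁ * δ), G.mul_mem (hAut hβ) hg₁δG, hβg⟩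

theorem IsRandom.exists_finset_forall_not_isSwitchOn (hΓ : Γ.IsRandom)
    {G : Subgroup (Equiv.Perm V)} (hG : IsClosedSubgroup G) (hAut : Γ.autGroup ≤ G)
    (hGsym : G ≤ Γ.symLR) {X : Set BSide} (hX : Γ.switchGroupStar X ≤ G)
    (hXmax : ∀ Y : Set BSide, Γ.switchGroupStar Y ≤ G → Y ⊆ X) {i : BSide} (hi : i ∉ X)
    {v : V} (hv : v ∈ Γ.side i) :
    ∃ D : Finset V, v ∈ D ∧ ∀ g ∈ G, ¬ Γ.IsSwitchOn g D {v} := by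
  classical
  by_contra! h
  refine hi (hXmax _ (switchGroupStar_insert_le hG hX fun u hu g hsw => ?_) (Set.mem_insert i X))
  refine hΓ.mem_of_isSwitch hG hAut hGsym (mem_left_iff_of_mem_side hu hv) (fun D => ?_) hsw
  obtain ⟨g, hgG, hg⟩ := h (insert v D) (Finset.mem_insert_self v D)
  exact ⟨g, hgG, hg.mono (by simp)⟩

theorem IsRandom.exists_injOn_adj_iff (hΓ : Γ.IsRandom) {κ : Type*} (K : Finset κ)
    (IsLeft : κ → Prop) (spec : κ → κ → Prop) :
    ∃ v : κ → V, Set.InjOn v K ∧ (∀ t ∈ K, v t ∈ Γ.left ↔ IsLeft t) ∧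
      ∀ a ∈ K, ∀ b ∈ K, IsLeft a → ¬ IsLeft b → (Γ.adj (v a) (v b) ↔ spec a b) := by
  classical
  induction K using Finset.induction_on with
  | empty => exact ⟨fun _ => Γ.left_nonempty.some, by simp, by simp, by simp⟩
  | @insert t K htK ih =>
    obtain ⟨v, hinj, hside, hadj⟩ := ih
    obtain ⟨y, hyside, hyK, hyl, hyr⟩ : ∃ y, (y ∈ Γ.left ↔ IsLeft t) ∧ y ∉ K.image v ∧
        (IsLeft t → ∀ s ∈ K, ¬ IsLeft s → (Γ.adj y (v s) ↔ spec t s)) ∧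
        (¬ IsLeft t → ∀ s ∈ K, IsLeft s → (Γ.adj (v s) y ↔ spec s t)) := by
      by_cases ht : IsLeft t
      · obtain ⟨y, hy, hyK, hyq⟩ := hΓ.exists_mem_left_adj_iff (K.image v)
          ((K.filter (¬ IsLeft ·)).image v) (by
            simp only [Finset.coe_image, Finset.coe_filter, Set.image_subset_iff]
            exact fun s hs => mem_right_iff_notMem_left.2 ((hside s hs.1).not.2 hs.2))
          (fun z => ∃ s ∈ K, v s = z ∧ spec t s)
        refine ⟨y, iff_of_true hy ht, hyK, fun _ s hs hs' => ?_, (absurd ht ·)⟩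
        rw [hyq _ (Finset.mem_image_of_mem _ (Finset.mem_filter.2 ⟨hs, hs'⟩))]
        exact ⟨fun ⟨s', hs'K, hvs, h⟩ => hinj hs'K hs hvs ▸ h, fun h => ⟨s, hs, rfl, h⟩⟩
      · obtain ⟨y, hy, hyK, hyq⟩ := hΓ.exists_mem_right_adj_iff (K.image v)
          ((K.filter IsLeft).image v) (by
            simp only [Finset.coe_image, Finset.coe_filter, Set.image_subset_iff]
            exact fun s hs => (hside s hs.1).2 hs.2)
          (fun z => ∃ s ∈ K, v s = z ∧ spec s t)
        refine ⟨y, iff_of_false (mem_right_iff_notMem_left.1 hy) ht, hyK, (absurd · ht),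
          fun _ s hs hs' => ?_⟩
        rw [hyq _ (Finset.mem_image_of_mem _ (Finset.mem_filter.2 ⟨hs, hs'⟩))]
        exact ⟨fun ⟨s', hs'K, hvs, h⟩ => hinj hs'K hs hvs ▸ h, fun h => ⟨s, hs, rfl, h⟩⟩
    have hvK : ∀ s ∈ K, Function.update v t y s = v s := fun s hs =>
      Function.update_of_ne (fun h : s = t => htK (h ▸ hs)) _ _
    refine ⟨Function.update v t y, ?_, ?_, ?_⟩
    · rw [Finset.coe_insert, Set.injOn_insert (Finset.mem_coe.not.2 htK)]
      refine ⟨hinj.congr fun s hs => (hvK s hs).symm, ?_⟩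
      rintro ⟨s, hs, hsy⟩
      rw [Function.update_self, hvK s hs] at hsy
      exact hyK (hsy ▸ Finset.mem_image_of_mem v hs)
    · simp only [Finset.forall_mem_insert, Function.update_self]
      exact ⟨hyside, fun s hs => hvK s hs ▸ hside s hs⟩
    · simp only [Finset.forall_mem_insert, Function.update_self]
      refine ⟨⟨fun h h' => absurd h h', fun b hb ht hb' => ?_⟩, fun a ha => ⟨fun ha' ht => ?_,
        fun b hb ha' hb' => ?_⟩⟩
      · rw [hvK b hb]; exact hyl ht b hb hb'
      · rw [hvK a ha]; exact hyr ht a ha ha'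
      · rw [hvK a ha, hvK b hb]; exact hadj a ha b hb ha' hb'

variable (Γ) in
/-- An index `(c, i, x)` stands for the vertex `x` of the `c`-th copy of the finite set attached
to side `i`. Besides the edges inside each copy, every index is joined to the copy `pivotCopy`
assigns to it as the pivot `pl` (on the left) or `pr` (on the right) would be; these copies are
chosen so that no pair of indices receives two prescriptions. -/
def copySpec (pl pr : V) : Bool × BSide × V → Bool × BSide × V → Prop
  | (c, .l, x), (c', .l, y) => if c = c' then Γ.adj x y else Γ.adj pl y
  | (c, .r, x), (c', .r, y) => if c = c' then Γ.adj x y else Γ.adj x pr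
  | (c, .r, x), (c', .l, y) => if c = c' then Γ.adj pl y else Γ.adj x pr
  | (_, .l, _), (_, .r, _) => False

/-- The copy of the set attached to side `i` in which the index `w` plays the pivot. -/
def pivotCopy : BSide → Bool × BSide × V → Bool
  | .l, (c, .l, _) => !c
  | .l, (c, .r, _) => c
  | .r, (c, _, _) => !c

open Classical in
noncomputable def copyMap (p : BSide → V) (i : BSide) (w : Bool × BSide × V) (x : V) :
    Bool × BSide × V :=
  if x = p i then w else (pivotCopy i w, i, x)

theorem copyMap_injective (p : BSide → V) (i : BSide) (w : Bool × BSide × V) :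
    Function.Injective (copyMap p i w) := by
  have hw : ∀ x, (pivotCopy i w, i, x) ≠ w := by
    rcases w with ⟨c, j, y⟩
    cases i <;> cases j <;> cases c <;> simp [pivotCopy]
  intro x y hxy
  unfold copyMap at hxy
  split_ifs at hxy with hx hy hy
  · rw [hx, hy]
  · exact absurd hxy.symm (hw y)
  · exact absurd hxy (hw x)
  · simpa using hxy

theorem copySpec_copyMap {p : BSide → V} (hp : ∀ i, p i ∈ Γ.side i) (i : BSide)
    (w : Bool × BSide × V) {a b : V} (ha : a ∈ Γ.left) (hb : b ∈ Γ.right) :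
    Γ.copySpec (p .l) (p .r) (copyMap p i w a) (copyMap p i w b) ↔ Γ.adj a b := by
  have hbl : b ≠ p .l := (ne_of_mem_left_of_mem_right (hp .l) hb).symm
  have har : a ≠ p .r := ne_of_mem_left_of_mem_right ha (hp .r)
  rcases w with ⟨c, j, y⟩
  cases i <;> simp only [copyMap, if_neg hbl, if_neg har] <;> split_ifs with h <;>
    cases j <;> cases c <;> simp [copySpec, pivotCopy, h]

theorem IsRandom.exists_autGroup_eq_copyMap (hΓ : Γ.IsRandom) {p : BSide → V}
    (hp : ∀ i, p i ∈ Γ.side i) {K : Finset (Bool × BSide × V)} {v : Bool × BSide × V → V}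
    (hinj : Set.InjOn v K) (hside : ∀ t ∈ K, v t ∈ Γ.left ↔ t.2.2 ∈ Γ.left)
    (hadj : ∀ a ∈ K, ∀ b ∈ K, a.2.2 ∈ Γ.left → b.2.2 ∉ Γ.left →
      (Γ.adj (v a) (v b) ↔ Γ.copySpec (p .l) (p .r) a b))
    {i : BSide} {t : Bool × BSide × V} (htK : t ∈ K) (hti : v t ∈ Γ.side i) {D : Finset V}
    (hmaps : ∀ x ∈ D, copyMap p i t x ∈ K) :
    ∃ α ∈ Γ.autGroup, ∀ x ∈ D, α x = v (copyMap p i t x) := by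
  have hsidex : ∀ x ∈ D, v (copyMap p i t x) ∈ Γ.left ↔ x ∈ Γ.left := by
    intro x hx
    rw [hside _ (hmaps x hx)]
    unfold copyMap
    split_ifs with hxp
    · rw [← hside t htK, hxp, mem_left_iff_of_mem_side hti (hp i)]
    · rfl
  refine hΓ.exists_autGroup_map_eq D (f := id) (fun x hx => (hsidex x hx).symm) (Set.injOn_id _)
    (hinj.comp (copyMap_injective p i t).injOn hmaps) fun a ha b hb hal hbr => ?_
  have hbl : b ∉ Γ.left := mem_right_iff_notMem_left.1 hbr
  refine (copySpec_copyMap hp i t hal hbr).symm.trans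
    (hadj _ (hmaps a ha) _ (hmaps b hb) ?_ ?_).symm
  · exact (hside _ (hmaps a ha)).1 ((hsidex a ha).2 hal)
  · exact fun h => hbl ((hsidex b hb).1 ((hside _ (hmaps b hb)).2 h))

theorem IsRandom.exists_finset_copies (hΓ : Γ.IsRandom) {p : BSide → V}
    (hp : ∀ i, p i ∈ Γ.side i) {D : BSide → Finset V} (hpD : ∀ i, p i ∈ D i) :
    ∃ H : Finset V, ((H : Set V) ∩ Γ.left).Nonempty ∧ ((H : Set V) ∩ Γ.right).Nonempty ∧
      ∀ i, ∀ w ∈ (H : Set V) ∩ Γ.side i,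
        ∃ α ∈ Γ.autGroup, α (p i) = w ∧ Set.MapsTo α (D i) H := by
  classical
  let K : Finset (Bool × BSide × V) :=
    Finset.univ ×ˢ ({BSide.l} ×ˢ D .l ∪ {BSide.r} ×ˢ D .r)
  have hK : ∀ c i x, (c, i, x) ∈ K ↔ x ∈ D i := by
    intro c i x
    cases i <;> simp [K]
  obtain ⟨v, hinj, hside, hadj⟩ :=
    hΓ.exists_injOn_adj_iff K (·.2.2 ∈ Γ.left) (Γ.copySpec (p .l) (p .r))
  have hpK : ∀ c i, (c, i, p i) ∈ K := fun c i => (hK c i _).2 (hpD i)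
  refine ⟨K.image v, ⟨_, Finset.mem_image_of_mem v (hpK true .l), ?_⟩,
    ⟨_, Finset.mem_image_of_mem v (hpK true .r), ?_⟩, ?_⟩
  · exact (hside _ (hpK true .l)).2 (hp .l)
  · exact mem_right_iff_notMem_left.2 fun h =>
      mem_right_iff_notMem_left.1 (hp .r) ((hside _ (hpK true .r)).1 h)
  rintro i _ ⟨hw, hwi⟩
  obtain ⟨t, htK, rfl⟩ := Finset.mem_image.1 hw
  have hmaps : ∀ x ∈ D i, copyMap p i t x ∈ K := by
    intro x hx
    unfold copyMap
    split_ifs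
    exacts [htK, (hK _ _ _).2 hx]
  obtain ⟨α, hα, hαx⟩ := hΓ.exists_autGroup_eq_copyMap hp hinj hside hadj htK hwi hmaps
  refine ⟨α, hα, by simpa [copyMap] using hαx _ (hpD i), fun x hx => ?_⟩
  rw [Finset.mem_coe, hαx x hx]
  exact Finset.mem_image_of_mem v (hmaps x hx)

end BipartiteGraph

/-- **Lemma 5.4.** Let `G` be a closed subgroup with `Aut(Γ)* ≤ G ≤ S_{l,r}(Γ)`
and let `X` be the largest subset of `{l, r}` with `S_X(Γ)* ⊆ G`.  Then there is
a finite bipartite subgraph `H` of `Γ` such that for any `i ∈ {l, r}`: if some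
`g ∈ G` restricts on `H` to a switch with respect to a vertex `v ∈ H ∩ R_i`,
then `i ∈ X`. -/
theorem exists_switch_detecting_subgraph {V : Type*} (Γ : BipartiteGraph V)
    (hΓ : Γ.IsRandom) (G : Subgroup (Equiv.Perm V)) (hG : IsClosedSubgroup G)
    (hAut : ∀ g : Equiv.Perm V, Γ.InAutStar g → g ∈ G)
    (hle : G ≤ Γ.switchGroup {BSide.l, BSide.r})
    (X : Set BSide) (hX : Γ.switchGroupStar X ≤ G)
    (hXmax : ∀ Y : Set BSide, Γ.switchGroupStar Y ≤ G → Y ⊆ X) :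
    ∃ H : Finset V, ((H : Set V) ∩ Γ.left).Nonempty ∧ ((H : Set V) ∩ Γ.right).Nonempty ∧
      ∀ i : BSide, (∃ v ∈ (H : Set V) ∩ Γ.side i, ∃ g ∈ G,
        Γ.IsSwitchOn (⇑g) (H : Set V) {v}) → i ∈ X := by
  have hAutG : Γ.autGroup ≤ G := fun g hg => hAut g (BipartiteGraph.inAutStar_of_mem_autGroup hg)
  have hGsym : G ≤ Γ.symLR := hle.trans (Γ.switchGroup_le_symLR _)
  choose p hp using Γ.side_nonempty
  have hD : ∀ i, ∃ D : Finset V, p i ∈ D ∧ (i ∉ X → ∀ g ∈ G, ¬ Γ.IsSwitchOn g D {p i}) := by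
    intro i
    by_cases hi : i ∈ X
    · exact ⟨{p i}, Finset.mem_singleton_self _, absurd hi⟩
    · obtain ⟨D, hpD, hD⟩ :=
        hΓ.exists_finset_forall_not_isSwitchOn hG hAutG hGsym hX hXmax hi (hp i)
      exact ⟨D, hpD, fun _ => hD⟩
  choose D hpD hD using hD
  obtain ⟨H, hHl, hHr, hcopy⟩ := hΓ.exists_finset_copies hp hpD
  refine ⟨H, hHl, hHr, fun i ⟨w, hw, g, hgG, hg⟩ => by_contra fun hi => ?_⟩
  obtain ⟨α, hα, rfl, hαD⟩ := hcopy i w hw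
  exact hD i hi (g * α) (G.mul_mem hgG (hAutG hα)) (hg.mul_of_mem_autGroup hα hαD)
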